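/- The function f(x) = (x+1)·log(2/(x+1)) + x·log x is (1/(M(M+1)))-convex on the interval (0, M] for every M > 0. -/

import Mathlib

/-!
The second derivative of `f` is `1/x - 1/(x+1) = 1/(x(x+1))`, which is decreasing in `x`, hence at
least `1/(M(M+1))` on `(0, M]`; so `f(x) - x²/(2M(M+1))` has a nonnegative second derivative there.
-/

open Real Set

theorem convexOn_sub_mul_sq_of_le_hasDerivWithinAt2 {D : Set ℝ} (hD : Convex ℝ D)
    {f f' f'' : ℝ → ℝ} {κ : ℝ} (hf : ContinuousOn f D)
    (hf' : ∀ x ∈ interior D, HasDerivWithinAt f (f' x) (interior D) x)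
    (hf'' : ∀ x ∈ interior D, HasDerivWithinAt f' (f'' x) (interior D) x)
    (hκ : ∀ x ∈ interior D, κ ≤ f'' x) :
    ConvexOn ℝ D (fun x => f x - κ * x ^ 2 / 2) := by
  refine convexOn_of_hasDerivWithinAt2_nonneg hD (f' := fun x => f' x - κ * x)
    (f'' := fun x => f'' x - κ) (hf.sub (by fun_prop)) (fun x hx => ?_) (fun x hx => ?_)
    (fun x hx => sub_nonneg.2 (hκ x hx))
  · exact ((hf' x hx).sub (((hasDerivAt_pow 2 x).const_mul κ).div_const 2).hasDerivWithinAt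
      ).congr_deriv (by ring)
  · exact ((hf'' x hx).sub ((hasDerivAt_id x).const_mul κ).hasDerivWithinAt).congr_deriv
      (by ring)

noncomputable def jsGenerator (x : ℝ) : ℝ := (x + 1) * log (2 / (x + 1)) + x * log x

theorem hasDerivAt_jsGenerator {x : ℝ} (hx : 0 < x) :
    HasDerivAt jsGenerator (log 2 - log (x + 1) + log x) x := by
  have hx1 : x + 1 ≠ 0 := by positivity
  have hlog : HasDerivAt (fun y => log (2 / (y + 1))) (-(x + 1)⁻¹) x :=
    ((hasDerivAt_const x (2 : ℝ)).div ((hasDerivAt_id' x).add_const 1) hx1).log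
      (div_ne_zero two_ne_zero hx1) |>.congr_deriv
        (by simp only [Pi.div_apply]; field_simp; ring)
  refine ((((hasDerivAt_id' x).add_const 1).mul hlog).add
    (hasDerivAt_mul_log hx.ne')).congr_deriv ?_
  rw [log_div two_ne_zero hx1]
  field_simp
  ring

theorem hasDerivAt_log_two_sub_log_add_one_add_log {x : ℝ} (hx : 0 < x) :
    HasDerivAt (fun y => log 2 - log (y + 1) + log y) (1 / x - 1 / (x + 1)) x :=
  (((hasDerivAt_const x (log 2)).sub (((hasDerivAt_id' x).add_const 1).log (by positivity))).add
    (hasDerivAt_log hx.ne')).congr_deriv (by ring)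

theorem one_div_mul_add_one_le_one_div_sub_one_div {x M : ℝ} (hx : 0 < x) (hxM : x ≤ M) :
    1 / (M * (M + 1)) ≤ 1 / x - 1 / (x + 1) := by
  have hsub : 1 / x - 1 / (x + 1) = 1 / (x * (x + 1)) := by
    field_simp
    ring
  rw [hsub]
  exact one_div_le_one_div_of_le (by positivity)
    (mul_le_mul hxM (by linarith) (by positivity) (by linarith))

theorem jensenShannon_kappa_convex_general (M : ℝ) :
    ConvexOn ℝ (Set.Ioc 0 M)
      (fun x => (x + 1) * Real.log (2 / (x + 1)) + x * Real.log x
          - (1 / (M * (M + 1))) * x ^ 2 / 2) := by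
  refine convexOn_sub_mul_sq_of_le_hasDerivWithinAt2 (f := jsGenerator)
    (f' := fun x => log 2 - log (x + 1) + log x) (f'' := fun x => 1 / x - 1 / (x + 1))
    (convex_Ioc 0 M)
    (fun x hx => (hasDerivAt_jsGenerator hx.1).continuousAt.continuousWithinAt) ?_ ?_ ?_
  all_goals rw [interior_Ioc]; intro x hx
  · exact (hasDerivAt_jsGenerator hx.1).hasDerivWithinAt
  · exact (hasDerivAt_log_two_sub_log_add_one_add_log hx.1).hasDerivWithinAt
  · exact one_div_mul_add_one_le_one_div_sub_one_div hx.1 hx.2.le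

theorem jensenShannon_kappa_convex (M : ℝ) (hM : 0 < M) :
    ConvexOn ℝ (Set.Ioc 0 M)
      (fun x => (x + 1) * Real.log (2 / (x + 1)) + x * Real.log x
          - (1 / (M * (M + 1))) * x ^ 2 / 2) :=
  jensenShannon_kappa_convex_general M
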